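/- arXiv:1712.08957 — 2 statements merged into one kernel-verified Lean document; each statement's English description precedes it below -/
import Mathlib

section
/- For every β > 0 and every u ∈ ℝ, almost surely limsup_{n→∞} (1/n)·log Z_n^{ST}(β,u) ≤ max{λ(β) + log d, βu + log d₁}. (Proposition 2.4: annealed upper bound on the free energy of the subtree-defect model.) -/
/-!
Taking expectations, independence gives `E Z_n = ∑_w e^{βu D(w)} e^{λ(β) (n - D(w))}`, where
`D(w)` is the number of generations the path `w` spends in the defect subtree. A path that leaves
`T̃` never returns, so `D(w) = j` forces the first `j` steps into `T̃`; hence at most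
`d₁^j d^(n-j)` paths have `D(w) = j`, and `E Z_n ≤ (n + 1) e^{nM}` with
`M = max {λ(β) + log d, βu + log d₁}`. Markov's inequality and Borel–Cantelli then give
`Z_n < (e^M + ε)^n` eventually, almost surely, for every `ε > 0`.
-/

open MeasureTheory ProbabilityTheory Filter Finset Real Topology

section LogGrowth

variable {Ω : Type*} [MeasurableSpace Ω] {P : Measure Ω}

lemma limsup_inv_mul_log_le {z : ℕ → ℝ} {a r : ℝ} (ha : 0 < a)
    (hlow : ∀ n, a ^ n ≤ z n) (hup : ∀ᶠ n in atTop, z n ≤ r ^ n) :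
    limsup (fun n : ℕ => 1 / (n : ℝ) * log (z n)) atTop ≤ log r := by
  have inv_mul_log_pow : ∀ {b : ℝ} {n : ℕ}, 1 ≤ n → 1 / (n : ℝ) * log (b ^ n) = log b := by
    intro b n hn
    rw [log_pow, ← mul_assoc,
      one_div_mul_cancel (by exact_mod_cast (Nat.one_le_iff_ne_zero.1 hn)), one_mul]
  have hlb : ∀ᶠ n : ℕ in atTop, log a ≤ 1 / (n : ℝ) * log (z n) := by
    filter_upwards [eventually_ge_atTop 1] with n hn
    rw [← inv_mul_log_pow (b := a) hn]
    gcongr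
    exact hlow n
  have hub : ∀ᶠ n : ℕ in atTop, 1 / (n : ℝ) * log (z n) ≤ log r := by
    filter_upwards [hup, eventually_ge_atTop 1] with n hzn hn
    rw [← inv_mul_log_pow (b := r) hn]
    gcongr
    exact (pow_pos ha n).trans_le (hlow n)
  exact limsup_le_of_le (isCoboundedUnder_le_of_eventually_le atTop hlb) hub

lemma summable_add_one_mul_geometric {q : ℝ} (hq0 : 0 ≤ q) (hq1 : q < 1) :
    Summable fun n : ℕ => ((n : ℝ) + 1) * q ^ n := by
  have hq : ‖q‖ < 1 := by rwa [norm_of_nonneg hq0]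
  refine ((summable_pow_mul_geometric_of_norm_lt_one 1 hq).add
    (summable_geometric_of_lt_one hq0 hq1)).congr fun n => ?_
  ring

lemma ae_eventually_lt_pow_of_integral_le [IsFiniteMeasure P] {Z : ℕ → Ω → ℝ} {K r : ℝ}
    (hK : 0 ≤ K) (hKr : K < r) (hZ : ∀ n, 0 ≤ᵐ[P] Z n) (hint : ∀ n, Integrable (Z n) P)
    (hbound : ∀ n : ℕ, ∫ ω, Z n ω ∂P ≤ (n + 1) * K ^ n) :
    ∀ᵐ ω ∂P, ∀ᶠ n in atTop, Z n ω < r ^ n := by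
  have hr : 0 < r := hK.trans_lt hKr
  have hmarkov : ∀ n : ℕ, P {ω | r ^ n ≤ Z n ω} ≤ ENNReal.ofReal ((n + 1) * (K / r) ^ n) := by
    intro n
    rw [← ofReal_measureReal (measure_ne_top P _)]
    refine ENNReal.ofReal_le_ofReal ?_
    rw [div_pow, ← mul_div_assoc, le_div_iff₀' (by positivity)]
    exact (mul_meas_ge_le_integral_of_nonneg (hZ n) (hint n) _).trans (hbound n)
  have hsum : (∑' n, P {ω | r ^ n ≤ Z n ω}) ≠ ⊤ := by
    refine ne_top_of_le_ne_top ?_ (ENNReal.tsum_le_tsum hmarkov)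
    rw [← ENNReal.ofReal_tsum_of_nonneg (fun n => by positivity)
      (summable_add_one_mul_geometric (by positivity) ((div_lt_one hr).2 hKr))]
    exact ENNReal.ofReal_ne_top
  filter_upwards [ae_eventually_notMem hsum] with ω hω
  exact hω.mono fun n hn => not_le.1 hn

/-- The lower bound `a ^ n ≤ Z n` is only there to keep the `limsup` from taking its junk value
on sequences unbounded below. -/
theorem ae_limsup_inv_mul_log_le_of_integral_le [IsFiniteMeasure P] {Z : ℕ → Ω → ℝ} {a K : ℝ}
    (ha : 0 < a) (hK : 0 < K) (hlow : ∀ n ω, a ^ n ≤ Z n ω) (hint : ∀ n, Integrable (Z n) P)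
    (hbound : ∀ n : ℕ, ∫ ω, Z n ω ∂P ≤ (n + 1) * K ^ n) :
    ∀ᵐ ω ∂P, limsup (fun n : ℕ => 1 / (n : ℝ) * log (Z n ω)) atTop ≤ log K := by
  set r : ℕ → ℝ := fun m => K + 1 / ((m : ℝ) + 1)
  have hKr : ∀ m, K < r m := fun m => lt_add_of_pos_right K Nat.one_div_pos_of_nat
  have hZ : ∀ n, 0 ≤ᵐ[P] Z n :=
    fun n => ae_of_all _ fun ω => (pow_pos ha n).le.trans (hlow n ω)
  have hup : ∀ᵐ ω ∂P, ∀ m, ∀ᶠ n in atTop, Z n ω < r m ^ n := ae_all_iff.2 fun m =>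
    ae_eventually_lt_pow_of_integral_le hK.le (hKr m) hZ hint hbound
  have hr : Tendsto r atTop (𝓝 K) := by
    simpa only [add_zero] using
      (tendsto_const_nhds (x := K)).add (tendsto_one_div_add_atTop_nhds_zero_nat (𝕜 := ℝ))
  filter_upwards [hup] with ω hω
  exact ge_of_tendsto' ((continuousAt_log hK.ne').tendsto.comp hr) fun m =>
    limsup_inv_mul_log_le ha (hlow · ω) ((hω m).mono fun _ => le_of_lt)

end LogGrowth

namespace SubtreeModel

variable {d : ℕ} (d₁ : ℕ) {n : ℕ}

lemma forall_mem_take_ofFn_iff (w : Fin n → Fin d) (m : ℕ) (p : Fin d → Prop) :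
    (∀ a ∈ (List.ofFn w).take m, p a) ↔ ∀ i : Fin n, (i : ℕ) < m → p (w i) := by
  simp only [List.mem_iff_getElem, List.length_take, List.length_ofFn, List.getElem_take,
    List.getElem_ofFn, lt_min_iff, forall_exists_index]
  exact ⟨fun h i hi => h _ i ⟨hi, i.2⟩ rfl, fun h a i hi ha => ha ▸ h ⟨i, hi.2⟩ hi.1⟩

lemma length_take_ofFn_succ (w : Fin n → Fin d) {k : ℕ} (hk : k < n) :
    ((List.ofFn w).take (k + 1)).length = k + 1 := by
  simp only [List.length_take, List.length_ofFn]; omega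

lemma injOn_take_ofFn_succ (w : Fin n → Fin d) :
    Set.InjOn (fun k => (List.ofFn w).take (k + 1)) (range n) := by
  intro k hk l hl h
  have := congrArg List.length h
  simp only [mem_coe, mem_range] at hk hl
  rwa [length_take_ofFn_succ w hk, length_take_ofFn_succ w hl, Nat.add_right_cancel_iff] at this

/-- The number of generations the path `w` spends in the defect subtree `T̃`; the prefix
`w_{1..k+1}` is `(List.ofFn w).take (k + 1)`. -/
def defectCount (w : Fin n → Fin d) : ℕ :=
  #{k ∈ range n | ∀ a ∈ (List.ofFn w).take (k + 1), (a : ℕ) < d₁}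

def bulkSites (w : Fin n → Fin d) : Finset (List (Fin d)) :=
  {k ∈ range n | ¬ ∀ a ∈ (List.ofFn w).take (k + 1), (a : ℕ) < d₁}.image
    fun k => (List.ofFn w).take (k + 1)

variable {d₁}

lemma defectCount_le (w : Fin n → Fin d) : defectCount d₁ w ≤ n :=
  (card_filter_le _ _).trans (card_range n).le

lemma card_bulkSites (w : Fin n → Fin d) : #(bulkSites d₁ w) = n - defectCount d₁ w := by
  rw [bulkSites,
    card_image_of_injOn ((injOn_take_ofFn_succ w).mono (coe_subset.2 (filter_subset _ _))),
    defectCount, filter_not, card_sdiff_of_subset (filter_subset _ _), card_range]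

lemma ne_nil_of_mem_bulkSites {w : Fin n → Fin d} {x : List (Fin d)}
    (hx : x ∈ bulkSites d₁ w) : x ≠ [] := by
  obtain ⟨k, hk, rfl⟩ := mem_image.1 hx
  rw [← List.length_pos_iff, length_take_ofFn_succ w (mem_range.1 (mem_filter.1 hk).1)]
  omega

/-- A path that leaves the defect subtree never returns to it. -/
lemma lt_of_lt_defectCount {w : Fin n → Fin d} {i : Fin n}
    (hi : (i : ℕ) < defectCount d₁ w) : (w i : ℕ) < d₁ := by
  by_contra hwi
  have hsub : {k ∈ range n | ∀ a ∈ (List.ofFn w).take (k + 1), (a : ℕ) < d₁} ⊆ range i := by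
    intro k hk
    rw [mem_filter, forall_mem_take_ofFn_iff] at hk
    exact mem_range.2 (not_le.1 fun hik => hwi (hk.2 i (Nat.lt_succ_of_le hik)))
  exact absurd ((card_le_card hsub).trans_eq (card_range i)) (not_le.2 hi)

lemma card_filter_forall_lt (hd₁ : d₁ ≤ d) {j : ℕ} (hj : j ≤ n) :
    #{w : Fin n → Fin d | ∀ i : Fin n, (i : ℕ) < j → (w i : ℕ) < d₁} =
      d₁ ^ j * d ^ (n - j) := by
  have : ({w | ∀ i : Fin n, (i : ℕ) < j → (w i : ℕ) < d₁} : Finset (Fin n → Fin d)) =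
      Fintype.piFinset fun i : Fin n =>
        if (i : ℕ) < j then ({a | (a : ℕ) < d₁} : Finset (Fin d)) else univ := by
    ext w
    simp only [mem_filter, mem_univ, true_and, Fintype.mem_piFinset]
    refine forall_congr' fun i => ?_
    split_ifs <;> simp [*]
  rw [this, Fintype.card_piFinset]
  simp only [apply_ite card]
  rw [prod_ite, prod_const, prod_const, filter_not,
    card_sdiff_of_subset (filter_subset _ _)]
  simp only [Fin.card_filter_val_lt, card_univ, Fintype.card_fin]
  rw [min_eq_right hd₁, min_eq_right hj]

lemma card_filter_defectCount_eq_le (hd₁ : d₁ ≤ d) {j : ℕ} (hj : j ≤ n) :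
    #{w : Fin n → Fin d | defectCount d₁ w = j} ≤ d₁ ^ j * d ^ (n - j) := by
  rw [← card_filter_forall_lt hd₁ hj]
  refine card_le_card fun w hw => mem_filter.2 ⟨mem_univ w, fun i hi => lt_of_lt_defectCount ?_⟩
  rwa [(mem_filter.1 hw).2]

lemma sum_pow_defectCount_le (hd₁ : d₁ ≤ d) {x y K : ℝ} (hx : 0 ≤ x) (hy : 0 ≤ y)
    (hxK : x * d₁ ≤ K) (hyK : y * d ≤ K) :
    ∑ w : Fin n → Fin d, x ^ defectCount d₁ w * y ^ (n - defectCount d₁ w) ≤ (n + 1) * K ^ n := by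
  have hmaps : ∀ w ∈ (univ : Finset (Fin n → Fin d)), defectCount d₁ w ∈ range (n + 1) :=
    fun w _ => mem_range.2 (Nat.lt_succ_of_le (defectCount_le w))
  rw [← sum_fiberwise_of_maps_to' hmaps fun j => x ^ j * y ^ (n - j)]
  calc ∑ j ∈ range (n + 1), ∑ w with defectCount d₁ w = j, x ^ j * y ^ (n - j)
      = ∑ j ∈ range (n + 1), (#{w : Fin n → Fin d | defectCount d₁ w = j} : ℝ) *
          (x ^ j * y ^ (n - j)) := by
        simp only [sum_const, nsmul_eq_mul]
    _ ≤ ∑ j ∈ range (n + 1), ((d₁ ^ j * d ^ (n - j) : ℕ) : ℝ) * (x ^ j * y ^ (n - j)) := by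
        gcongr with j hj
        exact_mod_cast card_filter_defectCount_eq_le hd₁ (Nat.lt_succ_iff.1 (mem_range.1 hj))
    _ = ∑ j ∈ range (n + 1), (x * d₁) ^ j * (y * d) ^ (n - j) := by
        refine sum_congr rfl fun j _ => ?_
        push_cast
        ring
    _ ≤ ∑ j ∈ range (n + 1), K ^ j * K ^ (n - j) := by
        have hx' : 0 ≤ x * d₁ := mul_nonneg hx d₁.cast_nonneg
        have hy' : 0 ≤ y * d := mul_nonneg hy d.cast_nonneg
        gcongr
        exact pow_nonneg (hx'.trans hxK) _
    _ = (n + 1) * K ^ n := by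
        rw [sum_congr rfl fun j hj => by
          rw [← pow_add, Nat.add_sub_cancel' (Nat.lt_succ_iff.1 (mem_range.1 hj))]]
        simp

section Energy

variable (d₁) {Ω : Type*}

/-- The energy `∑_{k ≤ n} [u·1(w_{1..k} ∈ T̃) + V(w_{1..k})·1(w_{1..k} ∉ T̃)]` of the path `w`,
so that `Z_n^{ST}(β,u) = ∑_w exp (β · subtreeEnergy)`. -/
noncomputable def subtreeEnergy (V : List (Fin d) → Ω → ℝ) (u : ℝ) (w : Fin n → Fin d) (ω : Ω) :
    ℝ :=
  ∑ k ∈ range n, if ∀ a ∈ (List.ofFn w).take (k + 1), (a : ℕ) < d₁ then u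
    else V ((List.ofFn w).take (k + 1)) ω

noncomputable def partitionFunction (V : List (Fin d) → Ω → ℝ) (n : ℕ) (β u : ℝ) (ω : Ω) : ℝ :=
  ∑ w : Fin n → Fin d, exp (β * subtreeEnergy d₁ V u w ω)

variable {d₁} {V : List (Fin d) → Ω → ℝ} {u : ℝ}

lemma subtreeEnergy_eq (w : Fin n → Fin d) (ω : Ω) :
    subtreeEnergy d₁ V u w ω = defectCount d₁ w * u + ∑ x ∈ bulkSites d₁ w, V x ω := by
  rw [subtreeEnergy, sum_ite, sum_const, nsmul_eq_mul, bulkSites,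
    sum_image ((injOn_take_ofFn_succ w).mono (coe_subset.2 (filter_subset _ _)))]
  rfl

lemma subtreeEnergy_of_forall_lt {w : Fin n → Fin d} (hw : ∀ i, (w i : ℕ) < d₁) (ω : Ω) :
    subtreeEnergy d₁ V u w ω = n * u := by
  rw [subtreeEnergy, sum_congr rfl fun k _ =>
    if_pos ((forall_mem_take_ofFn_iff w _ (fun a => (a : ℕ) < d₁)).2 fun i _ => hw i),
    sum_const, card_range, nsmul_eq_mul]

lemma exp_mul_subtreeEnergy (β : ℝ) (w : Fin n → Fin d) (ω : Ω) :
    exp (β * subtreeEnergy d₁ V u w ω) =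
      exp (β * u) ^ defectCount d₁ w * exp (β * (∑ x ∈ bulkSites d₁ w, V x) ω) := by
  rw [subtreeEnergy_eq, mul_add, exp_add, ← exp_nat_mul, Finset.sum_apply]
  ring_nf

lemma pow_le_partitionFunction (hd₁ : 0 < d₁) (hd₁d : d₁ ≤ d) (n : ℕ) (β : ℝ) (ω : Ω) :
    exp (β * u) ^ n ≤ partitionFunction d₁ V n β u ω := by
  let w₀ : Fin n → Fin d := fun _ => ⟨0, hd₁.trans_le hd₁d⟩
  calc exp (β * u) ^ n = exp (β * subtreeEnergy d₁ V u w₀ ω) := by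
        rw [subtreeEnergy_of_forall_lt (fun _ => hd₁) ω, ← exp_nat_mul]
        ring_nf
    _ ≤ partitionFunction d₁ V n β u ω :=
        single_le_sum (f := fun w => exp (β * subtreeEnergy d₁ V u w ω))
          (fun w _ => (exp_pos _).le) (mem_univ w₀)

end Energy

section Annealed

variable {Ω : Type*} [MeasurableSpace Ω] {P : Measure Ω}

lemma mgf_sum_eq_pow_of_identDistrib {ι : Type*} {X : ι → Ω → ℝ} {Y : Ω → ℝ}
    (hindep : iIndepFun X P) (hmeas : ∀ i, Measurable (X i)) {s : Finset ι}
    (hident : ∀ i ∈ s, IdentDistrib (X i) Y P P) (t : ℝ) :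
    mgf (∑ i ∈ s, X i) P t = mgf Y P t ^ #s := by
  rw [hindep.mgf_sum hmeas]
  exact prod_eq_pow_card fun i hi => mgf_congr_of_identDistrib _ _ (hident i hi) t

variable {V : List (Fin d) → Ω → ℝ} {V0 : Ω → ℝ} {β : ℝ}

lemma integrable_exp_mul_sum_bulkSites [IsFiniteMeasure P] (hindep : iIndepFun V P)
    (hmeas : ∀ x, Measurable (V x)) (hident : ∀ x, x ≠ [] → IdentDistrib (V x) V0 P P)
    (hint : Integrable (fun ω => exp (β * V0 ω)) P) (w : Fin n → Fin d) :
    Integrable (fun ω => exp (β * (∑ x ∈ bulkSites d₁ w, V x) ω)) P :=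
  hindep.integrable_exp_mul_sum hmeas fun x hx =>
    ((hident x (ne_nil_of_mem_bulkSites hx)).comp (measurable_const_mul β).exp).integrable_iff.2
      hint

lemma integral_exp_mul_subtreeEnergy (hindep : iIndepFun V P) (hmeas : ∀ x, Measurable (V x))
    (hident : ∀ x, x ≠ [] → IdentDistrib (V x) V0 P P) (u : ℝ) (w : Fin n → Fin d) :
    ∫ ω, exp (β * subtreeEnergy d₁ V u w ω) ∂P =
      exp (β * u) ^ defectCount d₁ w * mgf V0 P β ^ (n - defectCount d₁ w) := by
  simp_rw [exp_mul_subtreeEnergy]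
  rw [integral_const_mul, ← card_bulkSites, ← mgf_sum_eq_pow_of_identDistrib hindep hmeas
    fun x hx => hident x (ne_nil_of_mem_bulkSites hx)]
  rfl

lemma integrable_partitionFunction [IsFiniteMeasure P] (hindep : iIndepFun V P)
    (hmeas : ∀ x, Measurable (V x)) (hident : ∀ x, x ≠ [] → IdentDistrib (V x) V0 P P)
    (hint : Integrable (fun ω => exp (β * V0 ω)) P) (n : ℕ) (u : ℝ) :
    Integrable (partitionFunction d₁ V n β u) P := by
  unfold partitionFunction
  simp_rw [exp_mul_subtreeEnergy]
  exact integrable_finsetSum _ fun w _ =>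
    (integrable_exp_mul_sum_bulkSites hindep hmeas hident hint w).const_mul _

lemma integral_partitionFunction_le [IsFiniteMeasure P] (hd₁d : d₁ ≤ d) (hindep : iIndepFun V P)
    (hmeas : ∀ x, Measurable (V x)) (hident : ∀ x, x ≠ [] → IdentDistrib (V x) V0 P P)
    (hint : Integrable (fun ω => exp (β * V0 ω)) P) (n : ℕ) (u : ℝ) :
    ∫ ω, partitionFunction d₁ V n β u ω ∂P ≤
      (n + 1) * max (mgf V0 P β * d) (exp (β * u) * d₁) ^ n := by
  unfold partitionFunction
  rw [integral_finsetSum _ fun w _ => ?_]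
  · simp_rw [integral_exp_mul_subtreeEnergy hindep hmeas hident]
    exact sum_pow_defectCount_le hd₁d (exp_pos _).le mgf_nonneg (le_max_right _ _)
      (le_max_left _ _)
  · simp_rw [exp_mul_subtreeEnergy]
    exact (integrable_exp_mul_sum_bulkSites hindep hmeas hident hint w).const_mul _

end Annealed

end SubtreeModel

open SubtreeModel in
theorem subtree_free_energy_upper_bound_general
    {Ω : Type*} [MeasurableSpace Ω] (P : Measure Ω) [IsProbabilityMeasure P]
    (d d₁ : ℕ) (hd₁ : 1 ≤ d₁) (hd₁d : d₁ < d)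
    -- the i.i.d. bulk disorder, indexed by the nonempty lists over `Fin d`
    (V : List (Fin d) → Ω → ℝ) (V0 : Ω → ℝ)
    (hmeas : ∀ x, Measurable (V x)) (hmeas0 : Measurable V0)
    (hindep : iIndepFun V P)
    (hident : ∀ x : List (Fin d), x ≠ [] → Measure.map (V x) P = Measure.map V0 P)
    -- the cumulant generating function `λ`, finite everywhere
    (lam : ℝ → ℝ)
    (hint : ∀ β : ℝ, Integrable (fun ω => Real.exp (β * V0 ω)) P)
    (hlam : ∀ β : ℝ, lam β = Real.log (∫ ω, Real.exp (β * V0 ω) ∂P))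
    -- the partition function of the subtree-defect model
    (Z : ℕ → ℝ → ℝ → Ω → ℝ)
    (hZ : ∀ (n : ℕ) (β u : ℝ) (ω : Ω), Z n β u ω =
      ∑ w : Fin n → Fin d, Real.exp (β * ∑ k ∈ Finset.range n,
        (if ∀ a ∈ (List.ofFn w).take (k + 1), (a : ℕ) < d₁ then u
         else V ((List.ofFn w).take (k + 1)) ω)))
    (β u : ℝ) :
    ∀ᵐ ω ∂P, (Filter.limsup (fun n : ℕ => (1 / (n : ℝ)) * Real.log (Z n β u ω)) Filter.atTop) ≤
      max (lam β + Real.log d) (β * u + Real.log d₁) := by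
  have hZ_eq : ∀ n, Z n β u = partitionFunction d₁ V n β u := fun n => funext (hZ n β u)
  have hV : ∀ x, x ≠ [] → IdentDistrib (V x) V0 P P := fun x hx =>
    ⟨(hmeas x).aemeasurable, hmeas0.aemeasurable, hident x hx⟩
  have hd₁pos : (0 : ℝ) < d₁ := by exact_mod_cast hd₁
  have hK : max (mgf V0 P β * d) (exp (β * u) * d₁) =
      exp (max (lam β + log d) (β * u + log d₁)) := by
    have hmgf : ∫ ω, exp (β * V0 ω) ∂P = mgf V0 P β := rfl
    rw [Monotone.map_max exp_monotone, exp_add, exp_add, hlam, hmgf, exp_log (mgf_pos (hint β)),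
      exp_log hd₁pos, exp_log (hd₁pos.trans (by exact_mod_cast hd₁d))]
  have := ae_limsup_inv_mul_log_le_of_integral_le (exp_pos (β * u)) (hK ▸ exp_pos _)
    (fun n ω => hZ_eq n ▸ pow_le_partitionFunction hd₁ hd₁d.le n β ω)
    (fun n => hZ_eq n ▸ integrable_partitionFunction hindep hmeas hV (hint β) n u)
    (fun n => hZ_eq n ▸ integral_partitionFunction_le hd₁d.le hindep hmeas hV (hint β) n u)
  rwa [hK, log_exp] at this

/-- **Proposition 2.4** (annealed upper bound on the free energy of the subtree-defect
model). For every `β > 0` and every `u`, almost surely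
`limsup (1/n) log Z_n^{ST}(β,u) ≤ max {λ(β) + log d, βu + log d₁}`. -/
theorem subtree_free_energy_upper_bound
    {Ω : Type*} [MeasurableSpace Ω] (P : Measure Ω) [IsProbabilityMeasure P]
    (d d₁ : ℕ) (hd : 2 ≤ d) (hd₁ : 1 ≤ d₁) (hd₁d : d₁ < d)
    -- the i.i.d. bulk disorder, indexed by the nonempty lists over `Fin d`
    (V : List (Fin d) → Ω → ℝ) (V0 : Ω → ℝ)
    (hmeas : ∀ x, Measurable (V x)) (hmeas0 : Measurable V0)
    (hindep : iIndepFun V P)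
    (hident : ∀ x : List (Fin d), x ≠ [] → Measure.map (V x) P = Measure.map V0 P)
    -- the cumulant generating function `λ`, finite everywhere
    (lam : ℝ → ℝ)
    (hint : ∀ β : ℝ, Integrable (fun ω => Real.exp (β * V0 ω)) P)
    (hlam : ∀ β : ℝ, lam β = Real.log (∫ ω, Real.exp (β * V0 ω) ∂P))
    -- the partition function of the subtree-defect model
    (Z : ℕ → ℝ → ℝ → Ω → ℝ)
    (hZ : ∀ (n : ℕ) (β u : ℝ) (ω : Ω), Z n β u ω =
      ∑ w : Fin n → Fin d, Real.exp (β * ∑ k ∈ Finset.range n,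
        (if ∀ a ∈ (List.ofFn w).take (k + 1), (a : ℕ) < d₁ then u
         else V ((List.ofFn w).take (k + 1)) ω)))
    (β u : ℝ) (hβ : 0 < β) :
    ∀ᵐ ω ∂P, (Filter.limsup (fun n : ℕ => (1 / (n : ℝ)) * Real.log (Z n β u ω)) Filter.atTop) ≤
      max (lam β + Real.log d) (β * u + Real.log d₁) :=
  subtree_free_energy_upper_bound_general P d d₁ hd₁ hd₁d V V0 hmeas hmeas0 hindep hident lam hint
    hlam Z hZ β u
end

section
/- For every β > 0, the limit lim_{n→∞} (Var(e^{βV*}·Z_n^{HD}(β)))^{1/n} exists and equals max{d²·e^{2λ(β)}, d·e^{λ(2β)}}. (Lemma 2.6(a): exponential growth rate of the variance of the weighted homogeneous partition function.) -/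
/-!
Put `V*` at the root `[]` of the tree; then `e^{βV*} Z_n` is the sum over paths `w` of
`exp (β Σ_{x ∈ w} V x)`, where a path now visits `n + 1` nodes, root included. With
`m₁ = E e^{βV}` and `m₂ = E e^{2βV}`, two paths sharing their first `c` nodes have covariance
`m₂^c m₁^{2(n+1-c)} - m₁^{2(n+1)}`. Summing by parts over `c`, and counting the `d^n d^{n-j}`
pairs of paths that agree on their first `j` steps, gives
`Var = (m₂ - m₁²) Σ_{j ≤ n} (d m₂)^j (d² m₁²)^{n-j}`. The sum lies between `M^n` and `(n+1) M^n`
for `M = max (d² m₁²) (d m₂)`, and `m₂ - m₁² = Var e^{βV} > 0` because `V` is not constant, so the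
`n`-th root tends to `M`.
-/

open MeasureTheory ProbabilityTheory Filter Topology Real Finset

theorem Finset.eq_range_card_of_isLowerSet {s : Finset ℕ} (hs : IsLowerSet (s : Set ℕ)) :
    s = range #s := by
  refine eq_of_subset_of_card_le (fun k hk => mem_range.2 ?_) (by simp)
  have : range (k + 1) ⊆ s := fun j hj => hs (Nat.lt_succ_iff.1 (mem_range.1 hj)) hk
  simpa using card_le_card this

theorem Finset.sum_sub_eq_sum_card_filter_lt_mul {ι R : Type*} [Fintype ι] [CommRing R]
    (c : ι → ℕ) {N : ℕ} (hc : ∀ i, c i ≤ N) (G : ℕ → R) :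
    ∑ i, (G (c i) - G 0) = ∑ j ∈ range N, #{i | j < c i} * (G (j + 1) - G j) := by
  have hG : ∀ i, G (c i) - G 0 = ∑ j ∈ range N, if j < c i then G (j + 1) - G j else 0 := by
    intro i
    rw [← sum_filter, ← sum_range_sub]
    congr 1
    ext j
    simp only [mem_filter, mem_range]
    exact ⟨fun h => ⟨h.trans_le (hc i), h⟩, fun h => h.2⟩
  simp only [hG, card_filter, Nat.cast_sum, Nat.cast_ite, Nat.cast_one, Nat.cast_zero, sum_mul,
    ite_mul, one_mul, zero_mul]
  exact sum_comm

theorem Fintype.card_filter_forall_lt_imp_eq {α : Type*} [Fintype α] [DecidableEq α] {n : ℕ}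
    (w : Fin n → α) (j : ℕ) :
    #(univ.filter fun w' : Fin n → α => ∀ i : Fin n, (i : ℕ) < j → w i = w' i) =
      Fintype.card α ^ (n - j) := by
  have : (univ.filter fun w' : Fin n → α => ∀ i : Fin n, (i : ℕ) < j → w i = w' i) =
      Fintype.piFinset fun i : Fin n => if (i : ℕ) < j then {w i} else univ := by
    ext w'
    simp only [mem_filter, mem_univ, true_and, Fintype.mem_piFinset]
    refine forall_congr' fun i => ?_
    split_ifs with hi <;> simp [hi, eq_comm]
  rw [this, Fintype.card_piFinset]
  simp only [apply_ite Finset.card, card_singleton, card_univ]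
  rw [prod_ite, prod_const_one, prod_const, one_mul]
  congr 1
  have hsplit := card_filter_add_card_filter_not (s := univ) fun i : Fin n => (i : ℕ) < j
  rw [Fin.card_filter_val_lt, card_univ, Fintype.card_fin] at hsplit
  omega

section Paths

variable {α : Type*} {n : ℕ}

theorem List.length_take_ofFn (w : Fin n → α) {k : ℕ} (hk : k ≤ n) :
    ((List.ofFn w).take k).length = k := by
  simp [hk]

theorem List.take_ofFn_eq_take_ofFn_iff (w w' : Fin n → α) {k : ℕ} (hk : k ≤ n) :
    (List.ofFn w).take k = (List.ofFn w').take k ↔ ∀ i : Fin n, (i : ℕ) < k → w i = w' i := by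
  rw [List.ext_getElem_iff]
  simp only [List.length_take_ofFn _ hk, List.getElem_take, List.getElem_ofFn, true_and]
  exact ⟨fun h i hi => h i hi hi, fun h i hi _ => h ⟨i, by omega⟩ hi⟩

theorem List.injOn_take_ofFn (w : Fin n → α) :
    Set.InjOn (fun k => (List.ofFn w).take k) (Finset.range (n + 1) : Set ℕ) := by
  intro k hk j hj h
  simp only [coe_range, Set.mem_Iio, Nat.lt_succ_iff] at hk hj
  simpa [List.length_take_ofFn w hk, List.length_take_ofFn w hj] using congrArg List.length h

variable [DecidableEq α]

def pathNodes (w : Fin n → α) : Finset (List α) :=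
  (range (n + 1)).image fun k => (List.ofFn w).take k

theorem card_pathNodes (w : Fin n → α) : #(pathNodes w) = n + 1 := by
  rw [pathNodes, card_image_of_injOn (List.injOn_take_ofFn w), card_range]

theorem sum_pathNodes {M : Type*} [AddCommMonoid M] (w : Fin n → α) (f : List α → M) :
    ∑ x ∈ pathNodes w, f x = ∑ k ∈ range (n + 1), f ((List.ofFn w).take k) :=
  sum_image (List.injOn_take_ofFn w)

theorem lt_card_pathNodes_inter_iff (w w' : Fin n → α) {j : ℕ} (hj : j ≤ n) :
    j < #(pathNodes w ∩ pathNodes w') ↔ ∀ i : Fin n, (i : ℕ) < j → w i = w' i := by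
  set K := (range (n + 1)).filter fun k => ∀ i : Fin n, (i : ℕ) < k → w i = w' i
  have hinter : pathNodes w ∩ pathNodes w' = K.image fun k => (List.ofFn w).take k := by
    ext x
    simp only [pathNodes, K, mem_inter, mem_image, mem_filter, mem_range, Nat.lt_succ_iff]
    constructor
    · rintro ⟨⟨k, hk, rfl⟩, k', hk', h⟩
      obtain rfl : k' = k := by
        simpa [List.length_take_ofFn _ hk, List.length_take_ofFn _ hk'] using congrArg List.length h
      exact ⟨k', ⟨hk, (List.take_ofFn_eq_take_ofFn_iff w w' hk).1 h.symm⟩, rfl⟩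
    · rintro ⟨k, ⟨hk, h⟩, rfl⟩
      exact ⟨⟨k, hk, rfl⟩, k, hk, ((List.take_ofFn_eq_take_ofFn_iff w w' hk).2 h).symm⟩
  have hK : IsLowerSet (K : Set ℕ) := fun k i hik hk => by
    rw [mem_coe, mem_filter, mem_range] at hk ⊢
    exact ⟨by omega, fun l hl => hk.2 l (hl.trans_le hik)⟩
  rw [hinter,
    card_image_of_injOn ((List.injOn_take_ofFn w).mono (coe_subset.2 (filter_subset _ _))),
    ← mem_range, ← eq_range_card_of_isLowerSet hK]
  simp [K, hj]

theorem card_filter_lt_card_pathNodes_inter [Fintype α] {j : ℕ} (hj : j ≤ n) :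
    #(univ.filter fun p : (Fin n → α) × (Fin n → α) => j < #(pathNodes p.1 ∩ pathNodes p.2)) =
      Fintype.card α ^ n * Fintype.card α ^ (n - j) := by
  rw [card_filter, Fintype.sum_prod_type]
  simp_rw [lt_card_pathNodes_inter_iff _ _ hj, ← card_filter]
  simp [Fintype.card_filter_forall_lt_imp_eq]

end Paths

noncomputable def pathPartitionFunction {α Ω : Type*} [Fintype α] [DecidableEq α]
    (V : List α → Ω → ℝ) (β : ℝ) (n : ℕ) (ω : Ω) : ℝ :=
  ∑ w : Fin n → α, exp (β * ∑ x ∈ pathNodes w, V x ω)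

theorem pow_max_le_sum_pow_mul_pow {a b : ℝ} (ha : 0 ≤ a) (hb : 0 ≤ b) (n : ℕ) :
    max a b ^ n ≤ ∑ j ∈ range (n + 1), b ^ j * a ^ (n - j) := by
  have hterm : ∀ j ∈ range (n + 1),
      b ^ j * a ^ (n - j) ≤ ∑ j ∈ range (n + 1), b ^ j * a ^ (n - j) :=
    fun j hj => single_le_sum (f := fun j => b ^ j * a ^ (n - j)) (fun i _ => by positivity) hj
  rcases le_total a b with hab | hba
  · simpa [max_eq_right hab] using hterm n (self_mem_range_succ n)
  · simpa [max_eq_left hba] using hterm 0 (by simp)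

theorem sum_pow_mul_pow_le {a b : ℝ} (ha : 0 ≤ a) (hb : 0 ≤ b) (n : ℕ) :
    ∑ j ∈ range (n + 1), b ^ j * a ^ (n - j) ≤ (n + 1) * max a b ^ n := by
  have hterm : ∀ j ∈ range (n + 1), b ^ j * a ^ (n - j) ≤ max a b ^ n := fun j hj => by
    calc b ^ j * a ^ (n - j) ≤ max a b ^ j * max a b ^ (n - j) := by gcongr <;> simp
      _ = max a b ^ n := by rw [← pow_add, Nat.add_sub_cancel' (Nat.lt_succ_iff.1 (mem_range.1 hj))]
  simpa using sum_le_card_nsmul _ _ _ hterm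

theorem tendsto_rpow_one_div_natCast_nhds_one {K : ℝ} (hK : 0 < K) :
    Tendsto (fun n : ℕ => K ^ (1 / (n : ℝ))) atTop (𝓝 1) := by
  simpa using tendsto_const_nhds.rpow tendsto_one_div_atTop_nhds_zero_nat (Or.inl hK.ne')

theorem tendsto_natCast_add_one_rpow_one_div :
    Tendsto (fun n : ℕ => ((n : ℝ) + 1) ^ (1 / (n : ℝ))) atTop (𝓝 1) := by
  have := (tendsto_rpow_div_mul_add 1 1 (-1) zero_ne_one).comp
    (tendsto_atTop_add_const_right atTop 1 tendsto_natCast_atTop_atTop)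
  simpa [Function.comp_def] using this

theorem tendsto_mul_rpow_one_div_of_pow_le_of_le {K M : ℝ} {T : ℕ → ℝ} (hK : 0 < K) (hM : 0 ≤ M)
    (hlow : ∀ n, M ^ n ≤ T n) (hup : ∀ n, T n ≤ (n + 1) * M ^ n) :
    Tendsto (fun n : ℕ => (K * T n) ^ (1 / (n : ℝ))) atTop (𝓝 M) := by
  have hroot : ∀ {C : ℝ}, 0 ≤ C → ∀ n : ℕ, n ≠ 0 →
      (C * M ^ n) ^ (1 / (n : ℝ)) = C ^ (1 / (n : ℝ)) * M :=
    fun hC n hn => by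
      rw [Real.mul_rpow hC (by positivity), one_div, Real.pow_rpow_inv_natCast hM hn]
  have hlim_low : Tendsto (fun n : ℕ => K ^ (1 / (n : ℝ)) * M) atTop (𝓝 M) := by
    simpa using (tendsto_rpow_one_div_natCast_nhds_one hK).mul_const M
  have hlim_up : Tendsto (fun n : ℕ => (K * ((n : ℝ) + 1)) ^ (1 / (n : ℝ)) * M) atTop (𝓝 M) := by
    have := ((tendsto_rpow_one_div_natCast_nhds_one hK).mul
      tendsto_natCast_add_one_rpow_one_div).mul_const M
    simp only [one_mul] at this
    refine this.congr fun n => ?_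
    rw [Real.mul_rpow hK.le (by positivity)]
  refine tendsto_of_tendsto_of_tendsto_of_le_of_le' hlim_low hlim_up ?_ ?_ <;>
    filter_upwards [eventually_ne_atTop 0] with n hn
  · rw [← hroot hK.le n hn]
    exact Real.rpow_le_rpow (by positivity) (mul_le_mul_of_nonneg_left (hlow n) hK.le)
      (by positivity)
  · rw [← hroot (by positivity) n hn, mul_assoc]
    exact Real.rpow_le_rpow (mul_nonneg hK.le ((pow_nonneg hM n).trans (hlow n)))
      (mul_le_mul_of_nonneg_left (hup n) hK.le) (by positivity)

section Exponential

variable {ι Ω : Type*} [MeasurableSpace Ω] {μ : Measure Ω} {X : ι → Ω → ℝ}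

theorem ProbabilityTheory.iIndepFun.integral_exp_sum_mul (h : iIndepFun X μ)
    (hX : ∀ i, Measurable (X i)) (s : Finset ι) (t : ι → ℝ) :
    ∫ ω, exp (∑ i ∈ s, t i * X i ω) ∂μ = ∏ i ∈ s, mgf (X i) μ (t i) := by
  have h' : iIndepFun (fun i ω => t i * X i ω) μ :=
    h.comp (fun i x => t i * x) fun i => measurable_const_mul (t i)
  have := h'.mgf_sum (t := 1) (fun i => (hX i).const_mul (t i)) s
  simpa [mgf, mgf_const_mul, Finset.sum_apply] using this

theorem ProbabilityTheory.memLp_two_exp_mul {V : Ω → ℝ} (hV : Measurable V) {t : ℝ}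
    (hint : Integrable (fun ω => exp (2 * t * V ω)) μ) : MemLp (fun ω => exp (t * V ω)) 2 μ := by
  rw [memLp_two_iff_integrable_sq (by fun_prop)]
  convert hint using 2 with ω
  rw [← exp_nat_mul]
  ring_nf

theorem ProbabilityTheory.mgf_sq_lt_mgf_two_mul [IsProbabilityMeasure μ] {V : Ω → ℝ}
    (hV : Measurable V) (hnconst : ¬ ∃ c : ℝ, ∀ᵐ ω ∂μ, V ω = c) {t : ℝ} (ht : t ≠ 0)
    (hint : Integrable (fun ω => exp (2 * t * V ω)) μ) :
    mgf V μ t ^ 2 < mgf V μ (2 * t) := by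
  have hL2 := memLp_two_exp_mul hV hint
  have hvar : Var[fun ω => exp (t * V ω); μ] = mgf V μ (2 * t) - mgf V μ t ^ 2 := by
    rw [variance_eq_sub hL2, mgf, mgf]
    congr 2 with ω
    rw [Pi.pow_apply, ← exp_nat_mul]
    ring_nf
  rw [← sub_pos, ← hvar]
  refine (variance_nonneg _ _).lt_of_ne fun h0 => hnconst ⟨log (μ[fun ω => exp (t * V ω)]) / t, ?_⟩
  filter_upwards [ae_eq_integral_of_variance_eq_zero hL2 h0.symm] with ω hω
  rw [← hω, log_exp]
  field_simp

end Exponential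

section Tree

variable {Ω : Type*} [MeasurableSpace Ω] {P : Measure Ω}
  {α : Type*} [DecidableEq α] {V : List α → Ω → ℝ} {V0 : Ω → ℝ} {n : ℕ}
  (hV : iIndepFun V P) (hVm : ∀ x, Measurable (V x)) (hident : ∀ x, IdentDistrib (V x) V0 P P)
include hV hVm hident

theorem integral_exp_mul_sum_pathNodes (w : Fin n → α) (β : ℝ) :
    ∫ ω, exp (β * ∑ x ∈ pathNodes w, V x ω) ∂P = mgf V0 P β ^ (n + 1) := by
  simp_rw [mul_sum]
  rw [hV.integral_exp_sum_mul hVm,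
    prod_congr rfl fun x _ => congrFun (mgf_congr_identDistrib (hident x)) _,
    prod_const, card_pathNodes]

theorem integral_exp_mul_sum_pathNodes_mul (w w' : Fin n → α) (β : ℝ) :
    ∫ ω, exp (β * ∑ x ∈ pathNodes w, V x ω) * exp (β * ∑ x ∈ pathNodes w', V x ω) ∂P =
      mgf V0 P (2 * β) ^ #(pathNodes w ∩ pathNodes w') *
        (mgf V0 P β ^ 2) ^ (n + 1 - #(pathNodes w ∩ pathNodes w')) := by
  set S := pathNodes w
  set S' := pathNodes w'
  have hsub : S ∩ S' ⊆ S ∪ S' := inter_subset_left.trans subset_union_left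
  have hexp : ∀ ω, β * ∑ x ∈ S, V x ω + β * ∑ x ∈ S', V x ω =
      ∑ x ∈ S ∪ S', (if x ∈ S ∩ S' then 2 * β else β) * V x ω := fun ω => by
    have hshared : ∑ x ∈ S ∩ S', V x ω = ∑ x ∈ S ∪ S', if x ∈ S ∩ S' then V x ω else 0 := by
      rw [sum_ite_mem, inter_eq_right.2 hsub]
    rw [← mul_add, ← sum_union_inter, hshared, ← sum_add_distrib, mul_sum]
    refine sum_congr rfl fun x _ => ?_
    split_ifs <;> ring
  have hcard : #(S ∪ S') + #(S ∩ S') = 2 * (n + 1) := by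
    rw [card_union_add_card_inter, card_pathNodes, card_pathNodes, two_mul]
  simp_rw [← exp_add, hexp]
  rw [hV.integral_exp_sum_mul hVm, prod_congr rfl fun x _ =>
      (congrFun (mgf_congr_identDistrib (hident x)) _).trans (apply_ite (mgf V0 P) _ _ _),
    prod_ite, filter_not, filter_mem_eq_inter, inter_eq_right.2 hsub, prod_const, prod_const,
    card_sdiff_of_subset hsub, ← pow_mul]
  congr 2
  omega

theorem variance_pathPartitionFunction [IsProbabilityMeasure P] [Fintype α]
    (hint : ∀ t, Integrable (fun ω => exp (t * V0 ω)) P) (β : ℝ) :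
    Var[pathPartitionFunction V β n; P] = (mgf V0 P (2 * β) - mgf V0 P β ^ 2) *
      ∑ j ∈ range (n + 1), (Fintype.card α * mgf V0 P (2 * β)) ^ j *
        (Fintype.card α ^ 2 * mgf V0 P β ^ 2) ^ (n - j) := by
  set G : ℕ → ℝ := fun j => mgf V0 P (2 * β) ^ j * (mgf V0 P β ^ 2) ^ (n + 1 - j)
  have hL2 : ∀ w : Fin n → α, MemLp (fun ω => exp (β * ∑ x ∈ pathNodes w, V x ω)) 2 P :=
    fun w => memLp_two_exp_mul (by fun_prop) (by
      simpa using hV.integrable_exp_mul_sum hVm fun x _ =>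
        ((hident x).comp (measurable_const_mul _).exp).integrable_iff.2 (hint _))
  have hcov : ∀ w w' : Fin n → α,
      cov[fun ω => exp (β * ∑ x ∈ pathNodes w, V x ω),
        fun ω => exp (β * ∑ x ∈ pathNodes w', V x ω); P] =
        G #(pathNodes w ∩ pathNodes w') - G 0 := fun w w' => by
    rw [covariance_eq_sub (hL2 w) (hL2 w')]
    simp only [Pi.mul_apply]
    rw [integral_exp_mul_sum_pathNodes_mul hV hVm hident,
      integral_exp_mul_sum_pathNodes hV hVm hident,
      integral_exp_mul_sum_pathNodes hV hVm hident]
    simp only [G, Nat.sub_zero]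
    ring
  have hc : ∀ p : (Fin n → α) × (Fin n → α), #(pathNodes p.1 ∩ pathNodes p.2) ≤ n + 1 :=
    fun p => (card_le_card inter_subset_left).trans (card_pathNodes p.1).le
  unfold pathPartitionFunction
  rw [variance_fun_sum hL2]
  simp_rw [hcov]
  rw [← Fintype.sum_prod_type', sum_sub_eq_sum_card_filter_lt_mul _ hc, mul_sum]
  refine sum_congr rfl fun j hj => ?_
  have hjn := mem_range_succ_iff.1 hj
  rw [card_filter_lt_card_pathNodes_inter hjn]
  push_cast
  simp only [G]
  rw [show n + 1 - j = n - j + 1 by omega, show n + 1 - (j + 1) = n - j by omega,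
    show (Fintype.card α : ℝ) ^ n = Fintype.card α ^ j * Fintype.card α ^ (n - j) by
      rw [← pow_add, Nat.add_sub_cancel' hjn]]
  ring

end Tree

section RootedDisorder

variable {α : Type*}

/-- The root `[]` of the tree carries the extra variable `W none`; `W (some [])` is never used. -/
def rootIndex : List α → Option (List α)
  | [] => none
  | a :: l => some (a :: l)

theorem rootIndex_injective : Function.Injective (rootIndex (α := α)) := by
  rintro (_ | ⟨a, l⟩) (_ | ⟨b, m⟩) h <;> simp_all [rootIndex]

theorem rootIndex_of_ne_nil {x : List α} (hx : x ≠ []) : rootIndex x = some x := by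
  cases x
  · exact absurd rfl hx
  · rfl

theorem pathPartitionFunction_rootIndex {Ω : Type*} [Fintype α] [DecidableEq α]
    (W : Option (List α) → Ω → ℝ) (β : ℝ) (n : ℕ) (ω : Ω) :
    pathPartitionFunction (fun x => W (rootIndex x)) β n ω = exp (β * W none ω) *
      ∑ w : Fin n → α, exp (β * ∑ k ∈ range n, W (some ((List.ofFn w).take (k + 1))) ω) := by
  rw [pathPartitionFunction, mul_sum]
  refine sum_congr rfl fun w _ => ?_
  rw [← exp_add, sum_pathNodes, sum_range_succ', ← mul_add, add_comm]
  congr 3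
  refine sum_congr rfl fun k hk => congrArg (W · ω) (rootIndex_of_ne_nil ?_)
  rw [← List.length_pos_iff, List.length_take_ofFn w (mem_range.1 hk)]
  omega

end RootedDisorder

theorem variance_growth_rate_general
    {Ω : Type*} [MeasurableSpace Ω] (P : Measure Ω) [IsProbabilityMeasure P]
    (d : ℕ)
    -- the i.i.d. family: bulk disorder at `some x`, and the extra copy `V*` at `none`
    (W : Option (List (Fin d)) → Ω → ℝ) (V0 : Ω → ℝ)
    (hmeas : ∀ o, Measurable (W o)) (hmeas0 : Measurable V0)
    (hindep : iIndepFun W P)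
    (hident : ∀ x : List (Fin d), x ≠ [] → Measure.map (W (some x)) P = Measure.map V0 P)
    (hidentstar : Measure.map (W none) P = Measure.map V0 P)
    (hnconst : ¬ ∃ c : ℝ, ∀ᵐ ω ∂P, V0 ω = c)
    -- the cumulant generating function `λ`, finite everywhere
    (lam : ℝ → ℝ)
    (hint : ∀ β : ℝ, Integrable (fun ω => Real.exp (β * V0 ω)) P)
    (hlam : ∀ β : ℝ, lam β = Real.log (∫ ω, Real.exp (β * V0 ω) ∂P))
    -- the homogeneous-disorder partition function
    (Z : ℕ → ℝ → Ω → ℝ)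
    (hZ : ∀ (n : ℕ) (β : ℝ) (ω : Ω), Z n β ω =
      ∑ w : Fin n → Fin d, Real.exp (β * ∑ k ∈ Finset.range n,
        W (some ((List.ofFn w).take (k + 1))) ω))
    (β : ℝ) (hβ : 0 < β) :
    Filter.Tendsto
      (fun n : ℕ =>
        (variance (fun ω => Real.exp (β * W none ω) * Z n β ω) P) ^ (1 / (n : ℝ)))
      Filter.atTop
      (nhds (max ((d : ℝ) ^ 2 * Real.exp (2 * lam β)) ((d : ℝ) * Real.exp (lam (2 * β))))) := by
  have hrooted : ∀ x, IdentDistrib (W (rootIndex x)) V0 P P := by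
    rintro (_ | ⟨a, l⟩)
    · exact ⟨(hmeas _).aemeasurable, hmeas0.aemeasurable, hidentstar⟩
    · exact ⟨(hmeas _).aemeasurable, hmeas0.aemeasurable, hident _ (List.cons_ne_nil a l)⟩
  have hvar : ∀ n, variance (fun ω => exp (β * W none ω) * Z n β ω) P =
      (mgf V0 P (2 * β) - mgf V0 P β ^ 2) * ∑ j ∈ range (n + 1),
        (d * mgf V0 P (2 * β)) ^ j * (d ^ 2 * mgf V0 P β ^ 2) ^ (n - j) := fun n => by
    simp_rw [hZ, ← pathPartitionFunction_rootIndex]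
    simpa using variance_pathPartitionFunction (hindep.precomp rootIndex_injective)
      (fun x => hmeas _) hrooted hint β
  have hexp : ∀ t, exp (lam t) = mgf V0 P t := fun t => by rw [hlam]; exact exp_cgf (hint t)
  rw [two_mul (lam β), exp_add, hexp, hexp, ← sq]
  simp_rw [hvar]
  have ha : (0 : ℝ) ≤ d ^ 2 * mgf V0 P β ^ 2 := by positivity
  have hb : (0 : ℝ) ≤ d * mgf V0 P (2 * β) := mul_nonneg d.cast_nonneg mgf_nonneg
  exact tendsto_mul_rpow_one_div_of_pow_le_of_le
    (sub_pos.2 (mgf_sq_lt_mgf_two_mul hmeas0 hnconst hβ.ne' (hint _))) (le_max_of_le_left ha)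
    (pow_max_le_sum_pow_mul_pow ha hb) (sum_pow_mul_pow_le ha hb)

/-- **Lemma 2.6(a)** (exponential growth rate of the variance of the weighted
homogeneous partition function).  `W (some x)` is the bulk disorder at the node `x`
and `W none = V*` is an extra independent copy of the disorder; all these variables
are i.i.d. with distribution `V`.  For every `β > 0`,
`lim (Var(e^{βV*}·Z_n^{HD}(β)))^{1/n}` exists and equals
`max {d²·e^{2λ(β)}, d·e^{λ(2β)}}`. -/
theorem variance_growth_rate
    {Ω : Type*} [MeasurableSpace Ω] (P : Measure Ω) [IsProbabilityMeasure P]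
    (d : ℕ) (hd : 2 ≤ d)
    -- the i.i.d. family: bulk disorder at `some x`, and the extra copy `V*` at `none`
    (W : Option (List (Fin d)) → Ω → ℝ) (V0 : Ω → ℝ)
    (hmeas : ∀ o, Measurable (W o)) (hmeas0 : Measurable V0)
    (hindep : iIndepFun W P)
    (hident : ∀ x : List (Fin d), x ≠ [] → Measure.map (W (some x)) P = Measure.map V0 P)
    (hidentstar : Measure.map (W none) P = Measure.map V0 P)
    (hnconst : ¬ ∃ c : ℝ, ∀ᵐ ω ∂P, V0 ω = c)
    -- the cumulant generating function `λ`, finite everywhere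
    (lam : ℝ → ℝ)
    (hint : ∀ β : ℝ, Integrable (fun ω => Real.exp (β * V0 ω)) P)
    (hlam : ∀ β : ℝ, lam β = Real.log (∫ ω, Real.exp (β * V0 ω) ∂P))
    -- the homogeneous-disorder partition function
    (Z : ℕ → ℝ → Ω → ℝ)
    (hZ : ∀ (n : ℕ) (β : ℝ) (ω : Ω), Z n β ω =
      ∑ w : Fin n → Fin d, Real.exp (β * ∑ k ∈ Finset.range n,
        W (some ((List.ofFn w).take (k + 1))) ω))
    (β : ℝ) (hβ : 0 < β) :
    Filter.Tendsto
      (fun n : ℕ =>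
        (variance (fun ω => Real.exp (β * W none ω) * Z n β ω) P) ^ (1 / (n : ℝ)))
      Filter.atTop
      (nhds (max ((d : ℝ) ^ 2 * Real.exp (2 * lam β)) ((d : ℝ) * Real.exp (lam (2 * β))))) :=
  variance_growth_rate_general P d W V0 hmeas hmeas0 hindep hident hidentstar hnconst lam hint hlam
    Z hZ β hβ
end
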